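/- arXiv:2301.12292 — 3 statements merged into one kernel-verified Lean document; each statement's English description precedes it below -/
import Mathlib

section
/- Lipschitz comparison lemma for Rademacher averages (Meir–Zhang): suppose {φ_i}_{i=1}^N and {ψ_i}_{i=1}^N are functions on a set Θ such that for each i and all θ, θ' ∈ Θ, |φ_i(θ) − φ_i(θ')| ≤ |ψ_i(θ) − ψ_i(θ')|. Then for any function c: Θ → R, E_σ[sup_θ {c(θ) + Σ_{i=1}^N σ_i φ_i(θ)}] ≤ E_σ[sup_θ {c(θ) + Σ_{i=1}^N σ_i ψ_i(θ)}], where σ_i are i.i.d. Rademacher. -/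
open Finset

namespace MZ

noncomputable def sgn (b : Bool) : ℝ := if b then 1 else -1

lemma sgn_abs (b : Bool) : |sgn b| = 1 := by cases b <;> simp [sgn]

lemma sgn_not (b : Bool) : sgn (!b) = - sgn b := by cases b <;> simp [sgn]

noncomputable def G {Θ : Type*} {N : ℕ} (c : Θ → ℝ) (g : Fin N → Θ → ℝ)
    (σ : Fin N → Bool) (θ : Θ) : ℝ := c θ + ∑ i, sgn (σ i) * g i θ

/-- Core two-point comparison lemma. -/
lemma ciSup_pair_le {Θ : Type*} [Nonempty Θ] (h a b : Θ → ℝ)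
    (hab : ∀ θ θ', |a θ - a θ'| ≤ |b θ - b θ'|)
    (h1 : BddAbove (Set.range fun θ => h θ + b θ))
    (h2 : BddAbove (Set.range fun θ => h θ - b θ)) :
    (⨆ θ, h θ + a θ) + (⨆ θ, h θ - a θ) ≤
      (⨆ θ, h θ + b θ) + (⨆ θ, h θ - b θ) := by
  set X := (⨆ θ, h θ + b θ) + (⨆ θ, h θ - b θ) with hX
  have key : ∀ θ θ', (h θ + a θ) + (h θ' - a θ') ≤ X := by
    intro θ θ'
    have hb1 : h θ + b θ ≤ ⨆ t, h t + b t := le_ciSup h1 θ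
    have hb2 : h θ' - b θ' ≤ ⨆ t, h t - b t := le_ciSup h2 θ'
    have hb3 : h θ' + b θ' ≤ ⨆ t, h t + b t := le_ciSup h1 θ'
    have hb4 : h θ - b θ ≤ ⨆ t, h t - b t := le_ciSup h2 θ
    have h5 := hab θ θ'
    have h6 := le_abs_self (a θ - a θ')
    rcases abs_cases (b θ - b θ') with ⟨he, _⟩ | ⟨he, _⟩ <;> linarith
  have step1 : ∀ θ, (⨆ θ', h θ' - a θ') ≤ X - (h θ + a θ) := fun θ =>
    ciSup_le fun θ' => by linarith [key θ θ']
  have step2 : (⨆ θ, h θ + a θ) ≤ X - (⨆ θ', h θ' - a θ') :=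
    ciSup_le fun θ => by linarith [step1 θ]
  linarith

lemma bdd_mix {Θ : Type*} [Nonempty Θ] {N : ℕ} (φ ψ : Fin N → Θ → ℝ) (c : Θ → ℝ)
    (hlip : ∀ i (θ θ' : Θ), |φ i θ - φ i θ'| ≤ |ψ i θ - ψ i θ'|)
    (hψbdd : ∀ σ : Fin N → Bool, BddAbove (Set.range (G c ψ σ)))
    (g : Fin N → Θ → ℝ) (hg : ∀ i, g i = φ i ∨ g i = ψ i)
    (σ : Fin N → Bool) : BddAbove (Set.range (G c g σ)) := by
  have θ0 : Θ := Classical.arbitrary Θ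
  have hne : (Finset.univ : Finset (Fin N → Bool)).Nonempty := Finset.univ_nonempty
  set M := Finset.univ.sup' hne (fun τ : Fin N → Bool => ⨆ θ, G c ψ τ θ) with hM
  set C := ∑ i, (|φ i θ0| + |ψ i θ0|) with hC
  refine ⟨C + M, ?_⟩
  rintro x ⟨θ, rfl⟩
  set τ : Fin N → Bool := fun i => decide (0 ≤ ψ i θ) with hτdef
  have hterm : ∀ i : Fin N, sgn (σ i) * g i θ ≤ (|φ i θ0| + |ψ i θ0|) + sgn (τ i) * ψ i θ := by
    intro i
    have hτ : sgn (τ i) * ψ i θ = |ψ i θ| := by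
      rcases le_or_gt 0 (ψ i θ) with h0 | h0
      · simp [hτdef, sgn, h0, abs_of_nonneg h0]
      · simp [hτdef, sgn, not_le.2 h0, abs_of_neg h0]
    have hs : sgn (σ i) * g i θ ≤ |g i θ| := by
      calc sgn (σ i) * g i θ ≤ |sgn (σ i) * g i θ| := le_abs_self _
        _ = |sgn (σ i)| * |g i θ| := abs_mul _ _
        _ = |g i θ| := by rw [sgn_abs, one_mul]
    rcases hg i with h | h
    · rw [h] at hs ⊢
      have t1 : |φ i θ| - |φ i θ0| ≤ |φ i θ - φ i θ0| := abs_sub_abs_le_abs_sub _ _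
      have t2 := hlip i θ θ0
      have t3 : |ψ i θ - ψ i θ0| ≤ |ψ i θ| + |ψ i θ0| := abs_sub _ _
      linarith
    · rw [h] at hs ⊢
      have := abs_nonneg (φ i θ0)
      have := abs_nonneg (ψ i θ0)
      linarith
  have h1 : G c g σ θ ≤ C + G c ψ τ θ := by
    unfold G
    calc c θ + ∑ i, sgn (σ i) * g i θ
        ≤ c θ + ∑ i, ((|φ i θ0| + |ψ i θ0|) + sgn (τ i) * ψ i θ) := by
          gcongr with i _; exact hterm i
      _ = C + (c θ + ∑ i, sgn (τ i) * ψ i θ) := by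
          rw [Finset.sum_add_distrib]; ring
  have h2 : G c ψ τ θ ≤ ⨆ t, G c ψ τ t := le_ciSup (hψbdd τ) θ
  have h3 : (⨆ t, G c ψ τ t) ≤ M := by
    rw [hM]
    exact Finset.le_sup' (fun τ : Fin N → Bool => ⨆ θ, G c ψ τ θ) (Finset.mem_univ τ)
  linarith

lemma step_lemma {Θ : Type*} [Nonempty Θ] {N : ℕ} (φ ψ : Fin N → Θ → ℝ) (c : Θ → ℝ)
    (hlip : ∀ i (θ θ' : Θ), |φ i θ - φ i θ'| ≤ |ψ i θ - ψ i θ'|)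
    (hψbdd : ∀ σ : Fin N → Bool, BddAbove (Set.range (G c ψ σ)))
    (g : Fin N → Θ → ℝ) (hg : ∀ i, g i = φ i ∨ g i = ψ i)
    (k : Fin N) (hk : g k = φ k) :
    ∑ σ : Fin N → Bool, ⨆ θ, G c g σ θ ≤
      ∑ σ : Fin N → Bool, ⨆ θ, G c (Function.update g k (ψ k)) σ θ := by
  set g' := Function.update g k (ψ k) with hg'def
  have hg'k : g' k = ψ k := Function.update_self k _ g
  have hg'ne : ∀ i, i ≠ k → g' i = g i := fun i hi => Function.update_of_ne hi _ g
  have hg' : ∀ i, g' i = φ i ∨ g' i = ψ i := by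
    intro i
    by_cases h : i = k
    · subst h; right; exact hg'k
    · rw [hg'ne i h]; exact hg i
  -- flipping equivalence
  set flip : (Fin N → Bool) → (Fin N → Bool) := fun σ => Function.update σ k (!σ k) with hflip
  have hinv : Function.Involutive flip := by
    intro σ; funext i
    by_cases h : i = k
    · subst h; simp [hflip, Function.update_self]
    · simp [hflip, Function.update_of_ne h]
  have hsum : ∀ F : (Fin N → Bool) → ℝ, ∑ σ, F σ = ∑ σ, F (flip σ) := fun F =>
    Fintype.sum_equiv (Function.Involutive.toPerm flip hinv) F (fun σ => F (flip σ))
      (fun σ => (congrArg F (hinv σ)).symm)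
  -- pointwise pair inequality
  have pair : ∀ σ : Fin N → Bool,
      (⨆ θ, G c g σ θ) + (⨆ θ, G c g (flip σ) θ) ≤
      (⨆ θ, G c g' σ θ) + (⨆ θ, G c g' (flip σ) θ) := by
    intro σ
    set h : Θ → ℝ := fun θ => c θ + ∑ i ∈ Finset.univ.erase k, sgn (σ i) * g i θ with hh
    set s := sgn (σ k) with hs
    have hflipk : sgn (flip σ k) = -s := by
      simp [hflip, Function.update_self, sgn_not, hs]
    have hflipne : ∀ i, i ≠ k → sgn (flip σ i) = sgn (σ i) := by
      intro i hi; simp [hflip, Function.update_of_ne hi]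
    have eq1 : ∀ θ, G c g σ θ = h θ + s * φ k θ := by
      intro θ
      unfold G
      rw [← Finset.add_sum_erase _ _ (Finset.mem_univ k), hk, hh]
      ring
    have eq2 : ∀ θ, G c g (flip σ) θ = h θ - s * φ k θ := by
      intro θ
      unfold G
      rw [← Finset.add_sum_erase _ _ (Finset.mem_univ k), hk, hflipk, hh]
      rw [Finset.sum_congr rfl (fun i hi => by
        rw [hflipne i (Finset.mem_erase.1 hi).1])]
      ring
    have eq3 : ∀ θ, G c g' σ θ = h θ + s * ψ k θ := by
      intro θ
      unfold G
      rw [← Finset.add_sum_erase _ _ (Finset.mem_univ k), hg'k, hh]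
      rw [Finset.sum_congr rfl (fun i hi => by
        rw [hg'ne i (Finset.mem_erase.1 hi).1])]
      ring
    have eq4 : ∀ θ, G c g' (flip σ) θ = h θ - s * ψ k θ := by
      intro θ
      unfold G
      rw [← Finset.add_sum_erase _ _ (Finset.mem_univ k), hg'k, hflipk, hh]
      rw [Finset.sum_congr rfl (fun i hi => by
        rw [hflipne i (Finset.mem_erase.1 hi).1,
            hg'ne i (Finset.mem_erase.1 hi).1])]
      ring
    have b1 : BddAbove (Set.range fun θ => h θ + s * ψ k θ) := by
      have := bdd_mix φ ψ c hlip hψbdd g' hg' σ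
      rwa [show G c g' σ = fun θ => h θ + s * ψ k θ from funext eq3] at this
    have b2 : BddAbove (Set.range fun θ => h θ - s * ψ k θ) := by
      have := bdd_mix φ ψ c hlip hψbdd g' hg' (flip σ)
      rwa [show G c g' (flip σ) = fun θ => h θ - s * ψ k θ from funext eq4] at this
    have hab : ∀ θ θ', |s * φ k θ - s * φ k θ'| ≤ |s * ψ k θ - s * ψ k θ'| := by
      intro θ θ'
      rw [← mul_sub, ← mul_sub, abs_mul, abs_mul, hs, sgn_abs, one_mul, one_mul]
      exact hlip k θ θ'
    simp only [eq1, eq2, eq3, eq4]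
    exact ciSup_pair_le h (fun θ => s * φ k θ) (fun θ => s * ψ k θ) hab b1 b2
  have two_ineq :
      (∑ σ : Fin N → Bool, ⨆ θ, G c g σ θ) + (∑ σ : Fin N → Bool, ⨆ θ, G c g σ θ) ≤
      (∑ σ : Fin N → Bool, ⨆ θ, G c g' σ θ) + (∑ σ : Fin N → Bool, ⨆ θ, G c g' σ θ) := by
    nth_rewrite 2 [hsum (fun σ => ⨆ θ, G c g σ θ)]
    nth_rewrite 2 [hsum (fun σ => ⨆ θ, G c g' σ θ)]
    rw [← Finset.sum_add_distrib, ← Finset.sum_add_distrib]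
    exact Finset.sum_le_sum fun σ _ => pair σ
  linarith

end MZ

open MZ in
/-- **Lipschitz comparison lemma for Rademacher averages (Meir–Zhang).**
If `|φᵢ(θ) − φᵢ(θ')| ≤ |ψᵢ(θ) − ψᵢ(θ')|` for all `i, θ, θ'`, then for any
`c : Θ → ℝ`, `E_σ[sup_θ {c(θ) + Σᵢ σᵢ φᵢ(θ)}] ≤ E_σ[sup_θ {c(θ) + Σᵢ σᵢ ψᵢ(θ)}]`,
the expectation being the average over all `2^N` sign patterns; the suprema are
assumed finite (bounded ranges). -/
theorem rademacher_comparison_meir_zhang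
    {Θ : Type*} [Nonempty Θ] (N : ℕ) (φ ψ : Fin N → Θ → ℝ) (c : Θ → ℝ)
    (hlip : ∀ i (θ θ' : Θ), |φ i θ - φ i θ'| ≤ |ψ i θ - ψ i θ'|)
    (hφbdd : ∀ σ : Fin N → Bool, BddAbove (Set.range fun θ =>
      c θ + ∑ i, (if σ i then (1 : ℝ) else -1) * φ i θ))
    (hψbdd : ∀ σ : Fin N → Bool, BddAbove (Set.range fun θ =>
      c θ + ∑ i, (if σ i then (1 : ℝ) else -1) * ψ i θ)) :
    (1 / (2 : ℝ) ^ N) * ∑ σ : Fin N → Bool,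
        ⨆ θ, (c θ + ∑ i, (if σ i then (1 : ℝ) else -1) * φ i θ) ≤
      (1 / (2 : ℝ) ^ N) * ∑ σ : Fin N → Bool,
        ⨆ θ, (c θ + ∑ i, (if σ i then (1 : ℝ) else -1) * ψ i θ) := by
  have hψbdd' : ∀ σ : Fin N → Bool, BddAbove (Set.range (G c ψ σ)) := hψbdd
  have main : ∀ S : Finset (Fin N),
      ∑ σ : Fin N → Bool, ⨆ θ, G c φ σ θ ≤
        ∑ σ : Fin N → Bool, ⨆ θ, G c (fun i => if i ∈ S then ψ i else φ i) σ θ := by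
    intro S
    induction S using Finset.induction_on with
    | empty => simp
    | @insert k S hk ih =>
      refine le_trans ih ?_
      have hupd : (fun i => if i ∈ insert k S then ψ i else φ i) =
          Function.update (fun i => if i ∈ S then ψ i else φ i) k (ψ k) := by
        funext i
        by_cases h : i = k
        · subst h; simp [Function.update_self, hk]
        · simp [Function.update_of_ne h, Finset.mem_insert, h]
      rw [hupd]
      exact step_lemma φ ψ c hlip hψbdd'
        (fun i => if i ∈ S then ψ i else φ i)
        (fun i => by by_cases h : i ∈ S <;> simp [h])
        k (by simp [hk])
  have := main Finset.univ
  simp only [Finset.mem_univ, if_true] at this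
  have hpow : (0:ℝ) ≤ 1 / 2 ^ N := by positivity
  exact mul_le_mul_of_nonneg_left this hpow
end

section
/- Poincaré inequality for a two-component mixture: suppose probability measures p₀ and p₁ satisfy Poincaré inequalities with constants C₀ and C₁ respectively (Var_{p_i}[F] ≤ C_i E_{p_i}[‖∇F‖²]), p₀ is absolutely continuous with respect to p₁, and χ₁ = ∫ (dp₀/dp₁) dp₀ − 1 < ∞. Then for any α ∈ [0,1] and β = 1 − α, the mixture p = α p₀ + β p₁ satisfies a Poincaré inequality with constant C ≤ max{C₀, C₁(1 + α χ₁)}. -/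
open MeasureTheory ProbabilityTheory

lemma integral_cauchy_schwarz' {X : Type*} [MeasurableSpace X] (μ : Measure X)
    {g h : X → ℝ} (hg : MemLp g 2 μ) (hh : MemLp h 2 μ) :
    (∫ x, g x * h x ∂μ) ^ 2 ≤ (∫ x, g x ^ 2 ∂μ) * (∫ x, h x ^ 2 ∂μ) := by
  have hg2 : Integrable (fun x => g x ^ 2) μ := hg.integrable_sq
  have hh2 : Integrable (fun x => h x ^ 2) μ := hh.integrable_sq
  have hgh : Integrable (fun x => g x * h x) μ := by
    have := hh.smul hg (r := 1)
    rw [memLp_one_iff_integrable] at this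
    exact this
  set A := ∫ x, g x ^ 2 ∂μ with hA
  set B := ∫ x, g x * h x ∂μ with hB
  set C := ∫ x, h x ^ 2 ∂μ with hC
  have key : ∀ t : ℝ, 0 ≤ A * (t * t) + (2 * B) * t + C := by
    intro t
    have h0 : 0 ≤ ∫ x, (t * g x + h x) ^ 2 ∂μ := integral_nonneg fun x => sq_nonneg _
    have hexp : ∫ x, (t * g x + h x) ^ 2 ∂μ = A * (t * t) + (2 * B) * t + C := by
      have : (fun x => (t * g x + h x) ^ 2)
          = fun x => (t * t) * (g x ^ 2) + ((2 * t) * (g x * h x) + h x ^ 2) := by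
        funext x; ring
      have i1 : Integrable (fun x => (t * t) * g x ^ 2) μ := hg2.const_mul _
      have i2 : Integrable (fun x => (2 * t) * (g x * h x) + h x ^ 2) μ :=
        (hgh.const_mul _).add hh2
      have i3 : Integrable (fun x => (2 * t) * (g x * h x)) μ := hgh.const_mul _
      rw [this, integral_add i1 i2, integral_add i3 hh2, integral_const_mul, integral_const_mul]
      ring
    linarith [hexp ▸ h0]
  have hd := discrim_le_zero key
  rw [discrim] at hd
  nlinarith [hd]

lemma integral_mix_meas {X : Type*} [MeasurableSpace X] (p₀ p₁ : Measure X)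
    {a b : ℝ} (ha : 0 ≤ a) (hb : 0 ≤ b) {f : X → ℝ}
    (h0 : Integrable f p₀) (h1 : Integrable f p₁) :
    ∫ x, f x ∂(ENNReal.ofReal a • p₀ + ENNReal.ofReal b • p₁)
      = a * ∫ x, f x ∂p₀ + b * ∫ x, f x ∂p₁ := by
  rw [integral_add_measure (h0.smul_measure ENNReal.ofReal_ne_top)
      (h1.smul_measure ENNReal.ofReal_ne_top),
    integral_smul_measure, integral_smul_measure,
    ENNReal.toReal_ofReal ha, ENNReal.toReal_ofReal hb]
  simp [smul_eq_mul]

lemma mix_prob {X : Type*} [MeasurableSpace X] (p₀ p₁ : Measure X)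
    [IsProbabilityMeasure p₀] [IsProbabilityMeasure p₁]
    {a : ℝ} (ha : 0 ≤ a) (ha1 : a ≤ 1) :
    IsProbabilityMeasure (ENNReal.ofReal a • p₀ + ENNReal.ofReal (1 - a) • p₁) := by
  constructor
  simp only [Measure.add_apply, Measure.smul_apply, measure_univ, smul_eq_mul, mul_one]
  rw [← ENNReal.ofReal_add ha (by linarith)]
  norm_num

/-- **Poincaré inequality for a two-component mixture (Schlichting, Cor. 1).**
If `p₀, p₁` satisfy Poincaré inequalities with constants `C₀, C₁`, `p₀ ≪ p₁`, and
`χ₁ = ∫ (dp₀/dp₁) dp₀ − 1 < ∞`, then `p = α p₀ + (1−α) p₁` satisfies a Poincaré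
inequality with constant `max{C₀, C₁(1 + α χ₁)}`. -/
theorem mixture_poincare_two_components
    (e : ℕ) (p₀ p₁ : Measure (EuclideanSpace ℝ (Fin e)))
    [IsProbabilityMeasure p₀] [IsProbabilityMeasure p₁]
    (C₀ C₁ : ℝ) (hC₀ : 0 ≤ C₀) (hC₁ : 0 ≤ C₁)
    (hP₀ : ∀ F : EuclideanSpace ℝ (Fin e) → ℝ,
      ContDiff ℝ (⊤ : ℕ∞) F → HasCompactSupport F →
      variance F p₀ ≤ C₀ * ∫ x, ‖gradient F x‖ ^ 2 ∂p₀)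
    (hP₁ : ∀ F : EuclideanSpace ℝ (Fin e) → ℝ,
      ContDiff ℝ (⊤ : ℕ∞) F → HasCompactSupport F →
      variance F p₁ ≤ C₁ * ∫ x, ‖gradient F x‖ ^ 2 ∂p₁)
    (hac : p₀ ≪ p₁)
    (hχfin : Integrable (fun x => (p₀.rnDeriv p₁ x).toReal) p₀)
    (α : ℝ) (hα0 : 0 ≤ α) (hα1 : α ≤ 1) :
    ∀ F : EuclideanSpace ℝ (Fin e) → ℝ,
      ContDiff ℝ (⊤ : ℕ∞) F → HasCompactSupport F →
      variance F (ENNReal.ofReal α • p₀ + ENNReal.ofReal (1 - α) • p₁) ≤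
        max C₀ (C₁ * (1 + α * ((∫ x, (p₀.rnDeriv p₁ x).toReal ∂p₀) - 1))) *
          ∫ x, ‖gradient F x‖ ^ 2
            ∂(ENNReal.ofReal α • p₀ + ENNReal.ofReal (1 - α) • p₁) := by
  intro F hF hFs
  set β : ℝ := 1 - α with hβ
  have hβ0 : 0 ≤ β := by rw [hβ]; linarith
  set μ : Measure (EuclideanSpace ℝ (Fin e)) :=
    ENNReal.ofReal α • p₀ + ENNReal.ofReal β • p₁ with hμdef
  haveI : IsProbabilityMeasure μ := mix_prob p₀ p₁ hα0 hα1
  -- function facts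
  have hFc : Continuous F := hF.continuous
  have hF20 : MemLp F 2 p₀ := hFc.memLp_of_hasCompactSupport hFs
  have hF21 : MemLp F 2 p₁ := hFc.memLp_of_hasCompactSupport hFs
  have hF2μ : MemLp F 2 μ := hFc.memLp_of_hasCompactSupport hFs
  have hFint0 : Integrable F p₀ := hFc.integrable_of_hasCompactSupport hFs
  have hFint1 : Integrable F p₁ := hFc.integrable_of_hasCompactSupport hFs
  have hFsqc : Continuous fun x => F x ^ 2 := by continuity
  have hFsqs : HasCompactSupport fun x => F x ^ 2 := by
    have : (fun x => F x ^ 2) = (fun y : ℝ => y ^ 2) ∘ F := rfl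
    rw [this]; exact hFs.comp_left (by norm_num)
  have hFsq0 : Integrable (fun x => F x ^ 2) p₀ :=
    hFsqc.integrable_of_hasCompactSupport hFsqs
  have hFsq1 : Integrable (fun x => F x ^ 2) p₁ :=
    hFsqc.integrable_of_hasCompactSupport hFsqs
  -- gradient facts
  have hgradc : Continuous fun x => ‖gradient F x‖ ^ 2 := by
    have h1 : Continuous (fderiv ℝ F) := hF.continuous_fderiv (by simp)
    have h2 : Continuous fun x => gradient F x :=
      (InnerProductSpace.toDual ℝ _).symm.continuous.comp h1
    exact (h2.norm).pow 2
  have hgrads : HasCompactSupport fun x => ‖gradient F x‖ ^ 2 := by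
    have h2 : HasCompactSupport fun x => gradient F x := by
      have h3 := hFs.fderiv (𝕜 := ℝ)
      have : (fun x => gradient F x)
          = (fun L => (InnerProductSpace.toDual ℝ _).symm L) ∘ (fderiv ℝ F) := rfl
      rw [this]
      exact h3.comp_left (by simp)
    have : (fun x => ‖gradient F x‖ ^ 2)
        = (fun v : EuclideanSpace ℝ (Fin e) => ‖v‖ ^ 2) ∘ (fun x => gradient F x) := rfl
    rw [this]
    exact h2.comp_left (by simp)
  have hGint0 : Integrable (fun x => ‖gradient F x‖ ^ 2) p₀ :=
    hgradc.integrable_of_hasCompactSupport hgrads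
  have hGint1 : Integrable (fun x => ‖gradient F x‖ ^ 2) p₁ :=
    hgradc.integrable_of_hasCompactSupport hgrads
  -- notation
  set m₀ : ℝ := ∫ x, F x ∂p₀ with hm₀
  set m₁ : ℝ := ∫ x, F x ∂p₁ with hm₁
  set I₀ : ℝ := ∫ x, ‖gradient F x‖ ^ 2 ∂p₀ with hI₀def
  set I₁ : ℝ := ∫ x, ‖gradient F x‖ ^ 2 ∂p₁ with hI₁def
  set r : EuclideanSpace ℝ (Fin e) → ℝ := fun x => (p₀.rnDeriv p₁ x).toReal with hrdef
  set χ : ℝ := (∫ x, (p₀.rnDeriv p₁ x).toReal ∂p₀) - 1 with hχdef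
  have hrmeas : Measurable r := (Measure.measurable_rnDeriv p₀ p₁).ennreal_toReal
  haveI : p₀.HaveLebesgueDecomposition p₁ := Measure.haveLebesgueDecomposition_of_sigmaFinite p₀ p₁
  have hrint1 : Integrable r p₁ := Measure.integrable_toReal_rnDeriv
  have hr1 : ∫ x, r x ∂p₁ = 1 := by
    rw [hrdef, Measure.integral_toReal_rnDeriv hac]; simp
  have hrF : ∫ x, r x * F x ∂p₁ = m₀ := by
    have := integral_rnDeriv_smul hac (f := F)
    simpa [hrdef, smul_eq_mul, hm₀] using this
  have hr2 : ∫ x, r x ^ 2 ∂p₁ = χ + 1 := by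
    have := integral_rnDeriv_smul hac (f := r)
    rw [hχdef]
    have h2 : ∫ x, r x ^ 2 ∂p₁ = ∫ x, (p₀.rnDeriv p₁ x).toReal ∂p₀ := by
      rw [← this]; congr 1; funext x; simp [hrdef, smul_eq_mul, sq]
    rw [h2]; ring
  have hr2int : Integrable (fun x => r x ^ 2) p₁ := by
    have := (integrable_rnDeriv_smul_iff hac (f := r)).mpr hχfin
    have h2 : (fun x => (p₀.rnDeriv p₁ x).toReal • r x) = fun x => r x ^ 2 := by
      funext x; simp [hrdef, smul_eq_mul, sq]
    rwa [h2] at this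
  have hrm2 : MemLp r 2 p₁ :=
    (memLp_two_iff_integrable_sq hrmeas.aestronglyMeasurable).2 hr2int
  have hgm2 : MemLp (fun x => r x - 1) 2 p₁ := by
    have := hrm2.sub (memLp_const (1 : ℝ))
    exact this
  -- χ = ∫ (r - 1)^2 ≥ 0
  have hχ_eq : ∫ x, (r x - 1) ^ 2 ∂p₁ = χ := by
    have hexp : (fun x => (r x - 1) ^ 2)
        = fun x => (r x ^ 2 - 2 * r x) + 1 := by funext x; ring
    have ia : Integrable (fun x => r x ^ 2 - 2 * r x) p₁ := hr2int.sub (hrint1.const_mul 2)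
    have ib : Integrable (fun x => 2 * r x) p₁ := hrint1.const_mul 2
    rw [hexp, integral_add ia (integrable_const 1), integral_sub hr2int ib,
      integral_const_mul, hr1, hr2]
    simp only [integral_const, probReal_univ, measure_univ, ENNReal.toReal_one, smul_eq_mul, one_mul, mul_one]
    ring
  have hχ0 : 0 ≤ χ := hχ_eq ▸ integral_nonneg fun x => sq_nonneg _
  -- mean difference as centered integral
  have hrFint : Integrable (fun x => r x * F x) p₁ := by
    have := (integrable_rnDeriv_smul_iff hac (f := F)).mpr hFint0
    simpa [hrdef, smul_eq_mul] using this
  have hmean : m₀ - m₁ = ∫ x, (r x - 1) * (F x - m₁) ∂p₁ := by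
    have hexp : (fun x => (r x - 1) * (F x - m₁))
        = fun x => (r x * F x - m₁ * r x) - (F x - m₁) := by funext x; ring
    have ia : Integrable (fun x => r x * F x - m₁ * r x) p₁ := hrFint.sub (hrint1.const_mul m₁)
    have ib : Integrable (fun x => F x - m₁) p₁ := hFint1.sub (integrable_const m₁)
    have ic : Integrable (fun x => m₁ * r x) p₁ := hrint1.const_mul m₁
    rw [hexp, integral_sub ia ib, integral_sub hrFint ic,
      integral_sub hFint1 (integrable_const m₁), integral_const_mul, hrF, hr1]
    simp [hm₁]
  -- variance of F under p₁ as centered integral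
  have hVar1 : ∫ x, (F x - m₁) ^ 2 ∂p₁ = variance F p₁ := by
    rw [variance_eq_integral hF21.aemeasurable]
  have hCS : (m₀ - m₁) ^ 2 ≤ χ * variance F p₁ := by
    have := integral_cauchy_schwarz' p₁ hgm2 (hF21.sub (memLp_const m₁))
    calc (m₀ - m₁) ^ 2 = (∫ x, (r x - 1) * (F x - m₁) ∂p₁) ^ 2 := by rw [hmean]
      _ ≤ (∫ x, (r x - 1) ^ 2 ∂p₁) * (∫ x, (F x - m₁) ^ 2 ∂p₁) := by
          simpa using this
      _ = χ * variance F p₁ := by rw [hχ_eq, hVar1]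
  -- variance decomposition of the mixture
  have hIμ : ∫ x, ‖gradient F x‖ ^ 2 ∂μ = α * I₀ + β * I₁ :=
    integral_mix_meas p₀ p₁ hα0 hβ0 hGint0 hGint1
  have hFμ : ∫ x, F x ∂μ = α * m₀ + β * m₁ :=
    integral_mix_meas p₀ p₁ hα0 hβ0 hFint0 hFint1
  have hFsqμ : ∫ x, F x ^ 2 ∂μ = α * (∫ x, F x ^ 2 ∂p₀) + β * ∫ x, F x ^ 2 ∂p₁ :=
    integral_mix_meas p₀ p₁ hα0 hβ0 hFsq0 hFsq1
  have hvd : ∀ (p : Measure (EuclideanSpace ℝ (Fin e))) [IsProbabilityMeasure p],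
      MemLp F 2 p → variance F p = (∫ x, F x ^ 2 ∂p) - (∫ x, F x ∂p) ^ 2 := by
    intro p _ hp
    rw [variance_eq_sub hp]
    congr 1
  have hv0 : (∫ x, F x ^ 2 ∂p₀) = variance F p₀ + m₀ ^ 2 := by
    rw [hvd p₀ hF20]; ring
  have hv1 : (∫ x, F x ^ 2 ∂p₁) = variance F p₁ + m₁ ^ 2 := by
    rw [hvd p₁ hF21]; ring
  have hαβ : α + β = 1 := by rw [hβ]; ring
  have hVμ : variance F μ
      = α * variance F p₀ + β * variance F p₁ + α * β * (m₀ - m₁) ^ 2 := by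
    rw [hvd μ hF2μ, hFsqμ, hFμ, hv0, hv1]
    rw [hβ]
    ring
  -- final assembly
  have h1 : variance F p₀ ≤ C₀ * I₀ := hP₀ F hF hFs
  have h2 : variance F p₁ ≤ C₁ * I₁ := hP₁ F hF hFs
  have hI₀0 : 0 ≤ I₀ := integral_nonneg fun x => by positivity
  have hI₁0 : 0 ≤ I₁ := integral_nonneg fun x => by positivity
  have hV₁0 : 0 ≤ variance F p₁ := variance_nonneg F p₁
  set M : ℝ := max C₀ (C₁ * (1 + α * χ)) with hM
  have hM0 : C₀ ≤ M := le_max_left _ _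
  have hM1 : C₁ * (1 + α * χ) ≤ M := le_max_right _ _
  have hgoal : variance F μ ≤ M * ∫ x, ‖gradient F x‖ ^ 2 ∂μ := by
    rw [hVμ, hIμ]
    have step1 : α * variance F p₀ + β * variance F p₁ + α * β * (m₀ - m₁) ^ 2
        ≤ α * (C₀ * I₀) + β * ((1 + α * χ) * variance F p₁) := by
      have a1 : α * variance F p₀ ≤ α * (C₀ * I₀) := mul_le_mul_of_nonneg_left h1 hα0
      have a2 : α * β * (m₀ - m₁) ^ 2 ≤ α * β * (χ * variance F p₁) :=
        mul_le_mul_of_nonneg_left hCS (mul_nonneg hα0 hβ0)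
      have e1 : α * (C₀ * I₀) + β * ((1 + α * χ) * variance F p₁)
          = α * (C₀ * I₀) + (β * variance F p₁ + α * β * (χ * variance F p₁)) := by ring
      rw [e1]
      linarith
    have h1αχ : 0 ≤ 1 + α * χ := by positivity
    have step2 : α * (C₀ * I₀) + β * ((1 + α * χ) * variance F p₁)
        ≤ α * (M * I₀) + β * (M * I₁) := by
      have t1 : α * (C₀ * I₀) ≤ α * (M * I₀) :=
        mul_le_mul_of_nonneg_left (mul_le_mul_of_nonneg_right hM0 hI₀0) hα0
      have t2 : (1 + α * χ) * variance F p₁ ≤ M * I₁ := by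
        calc (1 + α * χ) * variance F p₁ ≤ (1 + α * χ) * (C₁ * I₁) :=
              mul_le_mul_of_nonneg_left h2 h1αχ
          _ = (C₁ * (1 + α * χ)) * I₁ := by ring
          _ ≤ M * I₁ := mul_le_mul_of_nonneg_right hM1 hI₁0
      have t2' := mul_le_mul_of_nonneg_left t2 hβ0
      linarith
    calc α * variance F p₀ + β * variance F p₁ + α * β * (m₀ - m₁) ^ 2
        ≤ α * (C₀ * I₀) + β * ((1 + α * χ) * variance F p₁) := step1
      _ ≤ α * (M * I₀) + β * (M * I₁) := step2
      _ = M * (α * I₀ + β * I₁) := by ring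
  exact hgoal
end

section
/- Convergence condition for the chi-squared divergence between Gaussian mixtures and a Gaussian: let p₀ = Σ_{j=1}^{i−1} α_j N(μ_j, σ_j² I_e) with Σα_j = 1 and p₁ = N(μ_i, σ_i² I_e). If σ_i² ≥ σ_j² for all j < i, then ∫ p₀(w)²/p₁(w) dw < ∞, i.e., χ²(p₀ ‖ p₁) is finite. -/
open MeasureTheory

/-- The isotropic Gaussian density on `ℝ^e` with mean `μ` and variance `σ²`. -/
noncomputable def isoGaussianDensity (e : ℕ) (μ : EuclideanSpace ℝ (Fin e))
    (σ : ℝ) (w : EuclideanSpace ℝ (Fin e)) : ℝ :=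
  (2 * Real.pi * σ ^ 2) ^ (-(e : ℝ) / 2) * Real.exp (-‖w - μ‖ ^ 2 / (2 * σ ^ 2))

/-! Each component of `p₀` is dominated by a multiple of the Gaussian of variance `σᵢ²` with the
same mean, so after expanding the square it suffices to integrate `q_a q_b / q_c` for Gaussians
`q` of one common variance. Completing the square,
`-‖w - a‖² - ‖w - b‖² + ‖w - c‖² = -‖w - (a + b - c)‖² + const`, so this quotient is a constant
multiple of the Gaussian centred at `a + b - c`. -/

theorem integrable_exp_neg_mul_sq_norm {V : Type*} [NormedAddCommGroup V]
    [InnerProductSpace ℝ V] [FiniteDimensional ℝ V] [MeasurableSpace V] [BorelSpace V]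
    {b : ℝ} (hb : 0 < b) : Integrable (fun v : V => Real.exp (-b * ‖v‖ ^ 2)) := by
  have h := (GaussianFourier.integrable_cexp_neg_mul_sq_norm_add (V := V) (b := b)
    (by simpa using hb) 0 0).norm
  refine h.congr (Filter.Eventually.of_forall fun v => ?_)
  simp only [zero_mul, add_zero, Complex.norm_exp]
  norm_cast

theorem norm_sub_sq_add_norm_sub_sq_sub_norm_sub_sq {E : Type*} [NormedAddCommGroup E]
    [InnerProductSpace ℝ E] (w a b c : E) :
    ‖w - a‖ ^ 2 + ‖w - b‖ ^ 2 - ‖w - c‖ ^ 2 =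
      ‖w - (a + b - c)‖ ^ 2 - (‖a + b - c‖ ^ 2 - ‖a‖ ^ 2 - ‖b‖ ^ 2 + ‖c‖ ^ 2) := by
  simp only [norm_sub_sq_real, inner_add_right, inner_sub_right]
  ring

namespace isoGaussianDensity

variable {e : ℕ}

theorem pos (μ : EuclideanSpace ℝ (Fin e)) {σ : ℝ} (hσ : σ ≠ 0) (w : EuclideanSpace ℝ (Fin e)) :
    0 < isoGaussianDensity e μ σ w := by
  unfold isoGaussianDensity
  positivity

theorem continuous (μ : EuclideanSpace ℝ (Fin e)) (σ : ℝ) :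
    Continuous (isoGaussianDensity e μ σ) := by
  unfold isoGaussianDensity
  fun_prop

theorem integrable (μ : EuclideanSpace ℝ (Fin e)) {σ : ℝ} (hσ : σ ≠ 0) :
    Integrable (isoGaussianDensity e μ σ) := by
  have h := ((integrable_exp_neg_mul_sq_norm (V := EuclideanSpace ℝ (Fin e))
    (b := 1 / (2 * σ ^ 2)) (by positivity)).comp_sub_right μ).const_mul
      ((2 * Real.pi * σ ^ 2) ^ (-(e : ℝ) / 2))
  refine h.congr (Filter.Eventually.of_forall fun w => ?_)
  simp only [isoGaussianDensity]
  ring_nf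

theorem le_mul_of_sq_le (μ : EuclideanSpace ℝ (Fin e)) {σ τ : ℝ} (hσ : σ ≠ 0)
    (hστ : σ ^ 2 ≤ τ ^ 2) (w : EuclideanSpace ℝ (Fin e)) :
    isoGaussianDensity e μ σ w ≤
      (2 * Real.pi * σ ^ 2) ^ (-(e : ℝ) / 2) / (2 * Real.pi * τ ^ 2) ^ (-(e : ℝ) / 2) *
        isoGaussianDensity e μ τ w := by
  have hτ : 0 < τ ^ 2 := (sq_pos_of_ne_zero hσ).trans_le hστ
  calc isoGaussianDensity e μ σ w
      ≤ (2 * Real.pi * σ ^ 2) ^ (-(e : ℝ) / 2) * Real.exp (-‖w - μ‖ ^ 2 / (2 * τ ^ 2)) := by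
        unfold isoGaussianDensity
        refine mul_le_mul_of_nonneg_left (Real.exp_le_exp.mpr ?_) (by positivity)
        rw [neg_div, neg_div, neg_le_neg_iff]
        exact div_le_div_of_nonneg_left (sq_nonneg _) (by positivity) (by linarith)
    _ = _ := by
        unfold isoGaussianDensity
        field_simp

theorem mul_div_eq (a b c : EuclideanSpace ℝ (Fin e)) {τ : ℝ} (hτ : τ ≠ 0)
    (w : EuclideanSpace ℝ (Fin e)) :
    isoGaussianDensity e a τ w * isoGaussianDensity e b τ w / isoGaussianDensity e c τ w =
      Real.exp ((‖a + b - c‖ ^ 2 - ‖a‖ ^ 2 - ‖b‖ ^ 2 + ‖c‖ ^ 2) / (2 * τ ^ 2)) *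
        isoGaussianDensity e (a + b - c) τ w := by
  have hexp : Real.exp (-‖w - a‖ ^ 2 / (2 * τ ^ 2)) * Real.exp (-‖w - b‖ ^ 2 / (2 * τ ^ 2)) =
      Real.exp ((‖a + b - c‖ ^ 2 - ‖a‖ ^ 2 - ‖b‖ ^ 2 + ‖c‖ ^ 2) / (2 * τ ^ 2)) *
        Real.exp (-‖w - (a + b - c)‖ ^ 2 / (2 * τ ^ 2)) *
        Real.exp (-‖w - c‖ ^ 2 / (2 * τ ^ 2)) := by
    simp only [← Real.exp_add]
    congr 1
    have := norm_sub_sq_add_norm_sub_sq_sub_norm_sub_sq w a b c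
    field_simp
    linarith
  simp only [isoGaussianDensity]
  rw [mul_mul_mul_comm, hexp]
  field_simp

theorem integrable_mul_div (a b c : EuclideanSpace ℝ (Fin e)) {σ σ' τ : ℝ} (hσ : σ ≠ 0)
    (hσ' : σ' ≠ 0) (hστ : σ ^ 2 ≤ τ ^ 2) (hσ'τ : σ' ^ 2 ≤ τ ^ 2) :
    Integrable (fun w => isoGaussianDensity e a σ w * isoGaussianDensity e b σ' w /
      isoGaussianDensity e c τ w) := by
  have hτ : τ ≠ 0 := (pow_ne_zero_iff two_ne_zero).mp ((sq_pos_of_ne_zero hσ).trans_le hστ).ne'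
  set C := (2 * Real.pi * σ ^ 2) ^ (-(e : ℝ) / 2) / (2 * Real.pi * τ ^ 2) ^ (-(e : ℝ) / 2)
  set C' := (2 * Real.pi * σ' ^ 2) ^ (-(e : ℝ) / 2) / (2 * Real.pi * τ ^ 2) ^ (-(e : ℝ) / 2)
  have hdom : Integrable (fun w => C * C' *
      (isoGaussianDensity e a τ w * isoGaussianDensity e b τ w / isoGaussianDensity e c τ w)) := by
    simp only [mul_div_eq a b c hτ]
    exact ((integrable _ hτ).const_mul _).const_mul _
  refine hdom.mono' (((continuous a σ).mul (continuous b σ')).div (continuous c τ)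
    fun w => (pos c hτ w).ne').aestronglyMeasurable (Filter.Eventually.of_forall fun w => ?_)
  have hc := pos c hτ w
  rw [Real.norm_of_nonneg (div_nonneg (mul_pos (pos a hσ w) (pos b hσ' w)).le hc.le),
    ← mul_div_assoc, mul_mul_mul_comm]
  gcongr
  · exact (pos b hσ' w).le
  · exact mul_nonneg (by positivity) (pos a hτ w).le
  · exact le_mul_of_sq_le a hσ hστ w
  · exact le_mul_of_sq_le b hσ' hσ'τ w

end isoGaussianDensity

theorem gaussian_mixture_chi_squared_finite_general
    (e k : ℕ) (α : Fin k → ℝ)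
    (μs : Fin k → EuclideanSpace ℝ (Fin e)) (σs : Fin k → ℝ)
    (hσs : ∀ j, 0 < σs j)
    (μi : EuclideanSpace ℝ (Fin e)) (σi : ℝ)
    (hwide : ∀ j, σs j ^ 2 ≤ σi ^ 2) :
    Integrable
      (fun w => (∑ j, α j * isoGaussianDensity e (μs j) (σs j) w) ^ 2 /
        isoGaussianDensity e μi σi w)
      (volume : Measure (EuclideanSpace ℝ (Fin e))) := by
  have hexpand : (fun w => (∑ j, α j * isoGaussianDensity e (μs j) (σs j) w) ^ 2 /
      isoGaussianDensity e μi σi w) = fun w => ∑ j, ∑ j', α j * α j' *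
        (isoGaussianDensity e (μs j) (σs j) w * isoGaussianDensity e (μs j') (σs j') w /
          isoGaussianDensity e μi σi w) := by
    funext w
    simp only [sq, Finset.sum_mul_sum, Finset.sum_div]
    refine Finset.sum_congr rfl fun j _ => Finset.sum_congr rfl fun j' _ => ?_
    ring
  rw [hexpand]
  refine integrable_finsetSum _ fun j _ => integrable_finsetSum _ fun j' _ => ?_
  exact (isoGaussianDensity.integrable_mul_div _ _ _ (hσs j).ne' (hσs j').ne'
    (hwide j) (hwide j')).const_mul _

/-- **Finiteness of the chi-squared divergence of a Gaussian mixture against a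
wider Gaussian.** If `p₀ = Σⱼ αⱼ N(μⱼ, σⱼ² I)` and `p₁ = N(μᵢ, σᵢ² I)` with
`σᵢ² ≥ σⱼ²` for all `j`, then `∫ p₀(w)²/p₁(w) dw < ∞`. -/
theorem gaussian_mixture_chi_squared_finite
    (e k : ℕ) (α : Fin k → ℝ) (hα0 : ∀ j, 0 ≤ α j) (hα1 : ∑ j, α j = 1)
    (μs : Fin k → EuclideanSpace ℝ (Fin e)) (σs : Fin k → ℝ)
    (hσs : ∀ j, 0 < σs j)
    (μi : EuclideanSpace ℝ (Fin e)) (σi : ℝ) (hσi : 0 < σi)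
    (hwide : ∀ j, σs j ^ 2 ≤ σi ^ 2) :
    Integrable
      (fun w => (∑ j, α j * isoGaussianDensity e (μs j) (σs j) w) ^ 2 /
        isoGaussianDensity e μi σi w)
      (volume : Measure (EuclideanSpace ℝ (Fin e))) :=
  gaussian_mixture_chi_squared_finite_general e k α μs σs hσs μi σi hwide
end
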